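/- If λ_k is a triple eigenvalue with cλ_k+d ≠ 0 and chain y_k, y_{k+1}, y_{k+2}, then ∫₀¹ y_{k+1} y_k dx = -(ad-bc)·( y_{k+1}(1)/(cλ_k+d) - c·y_k(1)/(cλ_k+d)² ) · y_k(1)/(cλ_k+d). -/

import Mathlib

open MeasureTheory Set

/-- Lemma 4.2(a): inner product of the first associated function with the eigenfunction
at a triple eigenvalue `λk ≠ -d/c`. -/
theorem assoc_eigen_inner_product_triple
    (a b c d β : ℝ) (habcd : a * d - b * c < 0) (hac : a * c ≠ 0)
    (hβ0 : 0 ≤ β) (hβπ : β < Real.pi)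
    (q : ℝ → ℝ) (hq : ContinuousOn q (Icc (0:ℝ) 1))
    (lam : ℝ) (hcd : c * lam + d ≠ 0)
    (y0 y0' y0'' y1 y1' y1'' : ℝ → ℝ)
    (hy0 : ∀ x ∈ Icc (0:ℝ) 1, HasDerivAt y0 (y0' x) x)
    (hy0' : ∀ x ∈ Icc (0:ℝ) 1, HasDerivAt y0' (y0'' x) x)
    (hy0'' : ContinuousOn y0'' (Icc (0:ℝ) 1))
    (hy1 : ∀ x ∈ Icc (0:ℝ) 1, HasDerivAt y1 (y1' x) x)
    (hy1' : ∀ x ∈ Icc (0:ℝ) 1, HasDerivAt y1' (y1'' x) x)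
    (hy1'' : ContinuousOn y1'' (Icc (0:ℝ) 1))
    (hode0 : ∀ x ∈ Icc (0:ℝ) 1, -y0'' x + q x * y0 x = lam * y0 x)
    (hode1 : ∀ x ∈ Icc (0:ℝ) 1, -y1'' x + q x * y1 x = lam * y1 x + y0 x)
    (hbc00 : y0 0 * Real.cos β = y0' 0 * Real.sin β)
    (hbc01 : y1 0 * Real.cos β = y1' 0 * Real.sin β)
    (hbc10 : (a * lam + b) * y0 1 = (c * lam + d) * y0' 1)
    (hbc11 : (a * lam + b) * y1 1 + a * y0 1 = (c * lam + d) * y1' 1 + c * y0' 1)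
    (y2 y2' y2'' : ℝ → ℝ)
    (hy2 : ∀ x ∈ Icc (0:ℝ) 1, HasDerivAt y2 (y2' x) x)
    (hy2' : ∀ x ∈ Icc (0:ℝ) 1, HasDerivAt y2' (y2'' x) x)
    (hy2'' : ContinuousOn y2'' (Icc (0:ℝ) 1))
    (hode2 : ∀ x ∈ Icc (0:ℝ) 1, -y2'' x + q x * y2 x = lam * y2 x + y1 x)
    (hbc02 : y2 0 * Real.cos β = y2' 0 * Real.sin β)
    (hbc12 : (a * lam + b) * y2 1 + a * y1 1 = (c * lam + d) * y2' 1 + c * y1' 1)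
    :
    ∫ x in (0:ℝ)..1, y1 x * y0 x
      = -(a * d - b * c) * (y1 1 / (c * lam + d) - c * y0 1 / (c * lam + d) ^ 2)
          * (y0 1 / (c * lam + d)) := by
  have h01 : (0:ℝ) ≤ 1 := by norm_num
  have hcont : ContinuousOn (fun x => y1 x * y0 x) (Icc (0:ℝ) 1) := by
    exact ContinuousOn.mul
      (fun x hx => (hy1 x hx).continuousAt.continuousWithinAt)
      (fun x hx => (hy0 x hx).continuousAt.continuousWithinAt)
  have key : ∫ x in (0:ℝ)..1, y1 x * y0 x
      = (y2 1 * y0' 1 - y2' 1 * y0 1) - (y2 0 * y0' 0 - y2' 0 * y0 0) := by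
    apply intervalIntegral.integral_eq_sub_of_hasDerivAt
      (f := fun x => y2 x * y0' x - y2' x * y0 x)
    · intro x hx
      rw [uIcc_of_le h01] at hx
      have h1 := (hy2 x hx).mul (hy0' x hx)
      have h2 := (hy2' x hx).mul (hy0 x hx)
      have h := h1.sub h2
      convert h using 1
      · rfl
      have e0 := hode0 x hx
      have e2 := hode2 x hx
      linear_combination (y2 x) * e0 - (y0 x) * e2
    · rw [← uIcc_of_le h01] at hcont
      exact hcont.intervalIntegrable
  have hW0 : y2 0 * y0' 0 - y2' 0 * y0 0 = 0 := by
    have hs : (y2 0 * y0' 0 - y2' 0 * y0 0) * Real.sin β = 0 := by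
      linear_combination y0 0 * hbc02 - y2 0 * hbc00
    have hc : (y2 0 * y0' 0 - y2' 0 * y0 0) * Real.cos β = 0 := by
      linear_combination y0' 0 * hbc02 - y2' 0 * hbc00
    have hpy := Real.sin_sq_add_cos_sq β
    linear_combination Real.sin β * hs + Real.cos β * hc
      - (y2 0 * y0' 0 - y2' 0 * y0 0) * hpy
  have hW1 : (c * lam + d) ^ 3 * (y2 1 * y0' 1 - y2' 1 * y0 1)
      = -(a * d - b * c) * y0 1 * (y1 1 * (c * lam + d) - c * y0 1) := by
    linear_combination (c ^ 2 * y0 1 - (c * lam + d) ^ 2 * y2 1) * hbc10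
      - (c * lam + d) * c * y0 1 * hbc11
      + (c * lam + d) ^ 2 * y0 1 * hbc12
  rw [key, hW0, sub_zero]
  field_simp
  linear_combination hW1
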